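/- Let χ be a bounded random variable with E(χ) < 0, P(χ > 0) > 0, and C₀ > 0, and let ν > 0 solve E(exp(C₀νχ)) = 1. For λ > 0 small enough there is a unique ν̃ ∈ (0,∞) solving E(exp(C₀ν̃(χ + λ))) = 1; moreover ν̃ < ν and ν̃ → ν as λ → 0. -/

import Mathlib

open MeasureTheory ProbabilityTheory Real

lemma exp_le_quad {x : ℝ} (hx : |x| ≤ 1) : Real.exp x ≤ 1 + x + x ^ 2 := by
  have h := Real.exp_bound hx (n := 2) (by norm_num)
  simp [Finset.sum_range_succ] at h
  have h2 := (abs_le.1 h).2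
  nlinarith [sq_abs x, sq_nonneg x]

section Aux
variable {Ω : Type*} [MeasurableSpace Ω] (μ : Measure Ω) [IsProbabilityMeasure μ]
variable {χ : Ω → ℝ}

lemma aux_integrable (hmeas : Measurable χ) (hbdd : ∀ᵐ ω ∂μ, |χ ω| ≤ 1)
    (c r l : ℝ) : Integrable (fun ω => Real.exp (c * r * (χ ω + l))) μ := by
  apply Integrable.mono' (integrable_const (Real.exp (|c * r| * (1 + |l|))))
  · exact ((hmeas.add_const l).const_mul (c * r)).exp.aestronglyMeasurable
  · filter_upwards [hbdd] with ω hω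
    rw [Real.norm_eq_abs, abs_of_pos (Real.exp_pos _)]
    apply Real.exp_le_exp.2
    calc c * r * (χ ω + l) ≤ |c * r * (χ ω + l)| := le_abs_self _
      _ = |c * r| * |χ ω + l| := abs_mul _ _
      _ ≤ |c * r| * (1 + |l|) := by
          gcongr
          calc |χ ω + l| ≤ |χ ω| + |l| := abs_add_le _ _
            _ ≤ 1 + |l| := by gcongr

lemma aux_convex (hmeas : Measurable χ) (hbdd : ∀ᵐ ω ∂μ, |χ ω| ≤ 1) (c l : ℝ) :
    ConvexOn ℝ Set.univ (fun r => ∫ ω, Real.exp (c * r * (χ ω + l)) ∂μ) := by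
  refine ⟨convex_univ, fun x _ y _ a b ha hb hab => ?_⟩
  have hx := aux_integrable μ hmeas hbdd c x l
  have hy := aux_integrable μ hmeas hbdd c y l
  simp only [smul_eq_mul]
  calc ∫ ω, Real.exp (c * (a * x + b * y) * (χ ω + l)) ∂μ
      ≤ ∫ ω, (a * Real.exp (c * x * (χ ω + l)) + b * Real.exp (c * y * (χ ω + l))) ∂μ := by
        apply integral_mono (aux_integrable μ hmeas hbdd c (a*x+b*y) l)
          ((hx.const_mul a).add (hy.const_mul b))
        intro ω
        show Real.exp (c * (a * x + b * y) * (χ ω + l))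
            ≤ a * Real.exp (c * x * (χ ω + l)) + b * Real.exp (c * y * (χ ω + l))
        have h : c * (a * x + b * y) * (χ ω + l)
            = a • (c * x * (χ ω + l)) + b • (c * y * (χ ω + l)) := by
          simp only [smul_eq_mul]; ring
        rw [h]
        simpa using convexOn_exp.2 (Set.mem_univ (c * x * (χ ω + l)))
          (Set.mem_univ (c * y * (χ ω + l))) ha hb hab
    _ = a * ∫ ω, Real.exp (c * x * (χ ω + l)) ∂μ
        + b * ∫ ω, Real.exp (c * y * (χ ω + l)) ∂μ := by
        rw [integral_add (hx.const_mul a) (hy.const_mul b),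
          integral_const_mul, integral_const_mul]

lemma aux_cont (hmeas : Measurable χ) (hbdd : ∀ᵐ ω ∂μ, |χ ω| ≤ 1) (c l : ℝ) :
    Continuous (fun r => ∫ ω, Real.exp (c * r * (χ ω + l)) ∂μ) := by
  rw [continuous_iff_continuousAt]
  intro r₀
  apply continuousAt_of_dominated (bound := fun _ => Real.exp ((|c| * (|r₀| + 1)) * (1 + |l|)))
  · exact Filter.Eventually.of_forall fun r =>
      ((hmeas.add_const l).const_mul (c * r)).exp.aestronglyMeasurable
  · filter_upwards [Metric.ball_mem_nhds r₀ one_pos] with r hr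
    filter_upwards [hbdd] with ω hω
    rw [Real.norm_eq_abs, abs_of_pos (Real.exp_pos _)]
    apply Real.exp_le_exp.2
    have hrb : |r| ≤ |r₀| + 1 := by
      have := abs_sub_abs_le_abs_sub r r₀
      have h2 : |r - r₀| < 1 := by simpa [Real.dist_eq] using hr
      linarith
    calc c * r * (χ ω + l) ≤ |c * r * (χ ω + l)| := le_abs_self _
      _ = |c| * |r| * |χ ω + l| := by rw [abs_mul, abs_mul]
      _ ≤ |c| * (|r₀| + 1) * (1 + |l|) := by
          have h3 : |χ ω + l| ≤ 1 + |l| := (abs_add_le _ _).trans (by gcongr)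
          gcongr
  · exact integrable_const _
  · exact Filter.Eventually.of_forall fun ω =>
      (Real.continuous_exp.comp (by continuity)).continuousAt

lemma aux_small (hmeas : Measurable χ) (hbdd : ∀ᵐ ω ∂μ, |χ ω| ≤ 1)
    {C₀ : ℝ} (hC₀ : 0 < C₀) {l s : ℝ} (hl0 : 0 ≤ l) (hl1 : l ≤ 1)
    (hlm : l ≤ -(∫ ω, χ ω ∂μ) / 2) (hm : ∫ ω, χ ω ∂μ < 0) (hs : 0 < s) :
    ∃ t : ℝ, 0 < t ∧ t < s ∧ ∫ ω, Real.exp (C₀ * t * (χ ω + l)) ∂μ < 1 := by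
  set m := ∫ ω, χ ω ∂μ with hmdef
  set t := min (s / 2) (min (1 / (2 * C₀)) (-m / (16 * C₀))) with htdef
  have ht0 : 0 < t := by
    apply lt_min (by linarith)
    apply lt_min (by positivity)
    have : 0 < -m := by linarith
    positivity
  have hts : t < s := (min_le_left _ _).trans_lt (by linarith)
  have ht1 : t ≤ 1 / (2 * C₀) := (min_le_right _ _).trans (min_le_left _ _)
  have ht2 : t ≤ -m / (16 * C₀) := (min_le_right _ _).trans (min_le_right _ _)
  refine ⟨t, ht0, hts, ?_⟩
  have hχint : Integrable χ μ :=
    Integrable.mono' (integrable_const 1) hmeas.aestronglyMeasurable (by simpa using hbdd)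
  -- integrability of the quadratic majorant
  have hsqint : Integrable (fun ω => (C₀ * t * (χ ω + l)) ^ 2) μ := by
    apply Integrable.mono' (integrable_const ((C₀ * t * 2) ^ 2))
    · exact (((hmeas.add_const l).const_mul (C₀ * t)).pow_const 2).aestronglyMeasurable
    · filter_upwards [hbdd] with ω hω
      rw [Real.norm_eq_abs, abs_of_nonneg (sq_nonneg _)]
      have h1 : |χ ω + l| ≤ 2 := (abs_add_le _ _).trans (by
        rw [abs_of_nonneg hl0]; linarith)
      have : |C₀ * t * (χ ω + l)| ≤ C₀ * t * 2 := by
        rw [abs_mul, abs_of_pos (by positivity : (0:ℝ) < C₀ * t)]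
        gcongr
      calc (C₀ * t * (χ ω + l)) ^ 2 = |C₀ * t * (χ ω + l)| ^ 2 := (sq_abs _).symm
        _ ≤ (C₀ * t * 2) ^ 2 := by gcongr
  have hlinint : Integrable (fun ω => C₀ * t * (χ ω + l)) μ :=
    ((hχint.add (integrable_const l)).const_mul (C₀ * t))
  have hquadint : Integrable
      (fun ω => 1 + C₀ * t * (χ ω + l) + (C₀ * t * (χ ω + l)) ^ 2) μ :=
    ((integrable_const 1).add hlinint).add hsqint
  have hbound : ∫ ω, Real.exp (C₀ * t * (χ ω + l)) ∂μ
      ≤ ∫ ω, (1 + C₀ * t * (χ ω + l) + (C₀ * t * (χ ω + l)) ^ 2) ∂μ := by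
    apply integral_mono_ae (aux_integrable μ hmeas hbdd C₀ t l) hquadint
    filter_upwards [hbdd] with ω hω
    apply exp_le_quad
    have h1 : |χ ω + l| ≤ 2 := (abs_add_le _ _).trans (by rw [abs_of_nonneg hl0]; linarith)
    rw [abs_mul, abs_of_pos (by positivity : (0:ℝ) < C₀ * t)]
    calc C₀ * t * |χ ω + l| ≤ C₀ * t * 2 := by gcongr
      _ ≤ C₀ * (1 / (2 * C₀)) * 2 := by gcongr
      _ = 1 := by field_simp
  have hsqle : ∫ ω, (C₀ * t * (χ ω + l)) ^ 2 ∂μ ≤ (C₀ * t * 2) ^ 2 := by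
    have := integral_mono_ae hsqint (integrable_const ((C₀ * t * 2) ^ 2)) ?_
    · simpa using this
    · filter_upwards [hbdd] with ω hω
      have h1 : |χ ω + l| ≤ 2 := (abs_add_le _ _).trans (by rw [abs_of_nonneg hl0]; linarith)
      calc (C₀ * t * (χ ω + l)) ^ 2 = (C₀ * t) ^ 2 * (χ ω + l) ^ 2 := by ring
        _ ≤ (C₀ * t) ^ 2 * 2 ^ 2 := by
            have hsq2 : (χ ω + l) ^ 2 ≤ 2 ^ 2 := by
              rw [← sq_abs]; exact pow_le_pow_left₀ (abs_nonneg _) h1 2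
            exact mul_le_mul_of_nonneg_left hsq2 (sq_nonneg _)
        _ = (C₀ * t * 2) ^ 2 := by ring
  have hcalc : ∫ ω, (1 + C₀ * t * (χ ω + l) + (C₀ * t * (χ ω + l)) ^ 2) ∂μ
      = 1 + C₀ * t * (m + l) + ∫ ω, (C₀ * t * (χ ω + l)) ^ 2 ∂μ := by
    have h1sum : Integrable (fun ω => 1 + C₀ * t * (χ ω + l)) μ :=
      (integrable_const 1).add hlinint
    have hχl : Integrable (fun ω => χ ω + l) μ := hχint.add (integrable_const l)
    rw [integral_add h1sum hsqint, integral_add (integrable_const 1) hlinint,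
      integral_const, integral_const_mul, integral_add hχint (integrable_const l),
      integral_const]
    simp [hmdef]
  have hfin : 1 + C₀ * t * (m + l) + (C₀ * t * 2) ^ 2 < 1 := by
    have h1 : m + l ≤ m / 2 := by linarith
    have h2 : C₀ * t * (m + l) ≤ C₀ * t * (m / 2) := by
      apply mul_le_mul_of_nonneg_left h1 (by positivity)
    have h3 : (C₀ * t * 2) ^ 2 ≤ C₀ * t * (-m / 4) := by
      have h4 : C₀ * t ≤ -m / 16 := by
        have := mul_le_mul_of_nonneg_left ht2 (le_of_lt hC₀)
        calc C₀ * t ≤ C₀ * (-m / (16 * C₀)) := this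
          _ = -m / 16 := by field_simp
      calc (C₀ * t * 2) ^ 2 = (C₀ * t) * ((C₀ * t) * 4) := by ring
        _ ≤ (C₀ * t) * (-m / 16 * 4) := by
            apply mul_le_mul_of_nonneg_left _ (by positivity)
            linarith
        _ = C₀ * t * (-m / 4) := by ring
    nlinarith [mul_pos hC₀ ht0]
  calc ∫ ω, Real.exp (C₀ * t * (χ ω + l)) ∂μ
      ≤ 1 + C₀ * t * (m + l) + ∫ ω, (C₀ * t * (χ ω + l)) ^ 2 ∂μ := by
        rw [← hcalc]; exact hbound
    _ ≤ 1 + C₀ * t * (m + l) + (C₀ * t * 2) ^ 2 := by linarith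
    _ < 1 := hfin

end Aux


/-- For `χ` bounded with negative mean and positive probability of being positive, and
`ν > 0` the solution of `E(exp(C₀νχ)) = 1`: for small `λ > 0` there is a unique
`ν̃ ∈ (0,∞)` with `E(exp(C₀ν̃(χ+λ))) = 1`; moreover `ν̃ < ν` and `ν̃ → ν` as `λ → 0`. -/
theorem shifted_exponent_exists_lt_tendsto
    {Ω : Type*} [MeasurableSpace Ω] (μ : Measure Ω) [IsProbabilityMeasure μ]
    (χ : Ω → ℝ) (hmeas : Measurable χ)
    (hbdd : ∀ᵐ ω ∂μ, |χ ω| ≤ 1)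
    (hmean : ∫ ω, χ ω ∂μ < 0)
    (hpos : 0 < μ {ω | 0 < χ ω})
    (C₀ ν : ℝ) (hC₀ : 0 < C₀) (hν : 0 < ν)
    (hexp : ∫ ω, Real.exp (C₀ * ν * χ ω) ∂μ = 1) :
    (∃ lam₀ > (0:ℝ), ∀ lam : ℝ, 0 < lam → lam < lam₀ →
      ∃! ν' : ℝ, 0 < ν' ∧ ∫ ω, Real.exp (C₀ * ν' * (χ ω + lam)) ∂μ = 1) ∧
    (∃ lam₀ > (0:ℝ), ∀ lam : ℝ, 0 < lam → lam < lam₀ →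
      ∀ ν' : ℝ, 0 < ν' → (∫ ω, Real.exp (C₀ * ν' * (χ ω + lam)) ∂μ = 1) → ν' < ν) ∧
    (∀ ε > (0:ℝ), ∃ δ > (0:ℝ), ∀ lam : ℝ, 0 < lam → lam < δ →
      ∀ ν' : ℝ, 0 < ν' → (∫ ω, Real.exp (C₀ * ν' * (χ ω + lam)) ∂μ = 1) →
        |ν' - ν| < ε) := by
  have hshift : ∀ l r : ℝ, ∫ ω, Real.exp (C₀ * r * (χ ω + l)) ∂μ
      = Real.exp (C₀ * r * l) * ∫ ω, Real.exp (C₀ * r * χ ω) ∂μ := by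
    intro l r
    rw [← integral_const_mul]
    congr 1; funext ω
    rw [← Real.exp_add]; congr 1; ring
  have hHν : ∀ l : ℝ, ∫ ω, Real.exp (C₀ * ν * (χ ω + l)) ∂μ = Real.exp (C₀ * ν * l) := by
    intro l; rw [hshift, hexp, mul_one]
  have hH0 : ∀ l : ℝ, ∫ ω, Real.exp ((0:ℝ) * (χ ω + l)) ∂μ = 1 := by
    intro l; simp
  have key : ∀ l : ℝ, 0 < l → ∀ ν' : ℝ, 0 < ν' →
      (∫ ω, Real.exp (C₀ * ν' * (χ ω + l)) ∂μ = 1) → ν' < ν := by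
    intro l hl ν' hν'pos hroot
    by_contra hcon
    push_neg at hcon
    have hgt : 1 < Real.exp (C₀ * ν * l) := by
      rw [← Real.exp_zero]
      exact Real.exp_lt_exp.2 (by positivity)
    have ha0 : (0:ℝ) ≤ (ν' - ν) / ν' := div_nonneg (by linarith) hν'pos.le
    have hb0 : (0:ℝ) ≤ ν / ν' := by positivity
    have hab : (ν' - ν) / ν' + ν / ν' = 1 := by field_simp; ring
    have hcv := (aux_convex μ hmeas hbdd C₀ l).2 (Set.mem_univ (0:ℝ)) (Set.mem_univ ν')
      ha0 hb0 hab
    simp only [smul_eq_mul, mul_zero, zero_add] at hcv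
    rw [div_mul_cancel₀ ν (ne_of_gt hν'pos)] at hcv
    rw [hHν l, hH0 l, hroot, mul_one, mul_one, hab] at hcv
    linarith
  have nottwo : ∀ l : ℝ, 0 < l → l ≤ 1 → l ≤ -(∫ ω, χ ω ∂μ) / 2 → ∀ a b : ℝ, 0 < a → a < b →
      (∫ ω, Real.exp (C₀ * a * (χ ω + l)) ∂μ = 1) →
      (∫ ω, Real.exp (C₀ * b * (χ ω + l)) ∂μ = 1) → False := by
    intro l hl hl1 hlm a b ha hab hrootA hrootB
    obtain ⟨t, ht0, hta, htlt⟩ := aux_small μ hmeas hbdd hC₀ hl.le hl1 hlm hmean ha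
    have hbt : (0:ℝ) < b - t := by linarith
    have hc1 : (0:ℝ) < (b - a) / (b - t) := div_pos (by linarith) hbt
    have hc2 : (0:ℝ) ≤ (a - t) / (b - t) := div_nonneg (by linarith) hbt.le
    have hsum : (b - a) / (b - t) + (a - t) / (b - t) = 1 := by field_simp; ring
    have hcomb : (b - a) / (b - t) * t + (a - t) / (b - t) * b = a := by
      field_simp; ring
    have hcv := (aux_convex μ hmeas hbdd C₀ l).2 (Set.mem_univ t) (Set.mem_univ b)
      hc1.le hc2 hsum
    simp only [smul_eq_mul] at hcv
    rw [hcomb, hrootA, hrootB] at hcv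
    have := mul_lt_mul_of_pos_left htlt hc1
    nlinarith
  have hlam0 : (0:ℝ) < min (-(∫ ω, χ ω ∂μ) / 2) 1 := lt_min (by linarith) one_pos
  refine ⟨⟨min (-(∫ ω, χ ω ∂μ) / 2) 1, hlam0, ?_⟩,
    ⟨min (-(∫ ω, χ ω ∂μ) / 2) 1, hlam0, fun lam hlam _ => key lam hlam⟩, ?_⟩
  · intro lam hlam hlamlt
    have hl1 : lam ≤ 1 := ((lt_min_iff.1 hlamlt).2).le
    have hlm : lam ≤ -(∫ ω, χ ω ∂μ) / 2 := ((lt_min_iff.1 hlamlt).1).le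
    obtain ⟨t, ht0, htν, htlt⟩ := aux_small μ hmeas hbdd hC₀ hlam.le hl1 hlm hmean hν
    have hgt : 1 < Real.exp (C₀ * ν * lam) := by
      rw [← Real.exp_zero]
      exact Real.exp_lt_exp.2 (by positivity)
    have h1mem : (1:ℝ) ∈ Set.Ioo (∫ ω, Real.exp (C₀ * t * (χ ω + lam)) ∂μ)
        (∫ ω, Real.exp (C₀ * ν * (χ ω + lam)) ∂μ) :=
      ⟨htlt, by rw [hHν lam]; exact hgt⟩
    obtain ⟨r, hrmem, hreq⟩ :=
      intermediate_value_Ioo htν.le (aux_cont μ hmeas hbdd C₀ lam).continuousOn h1mem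
    have hr0 : 0 < r := ht0.trans hrmem.1
    refine ⟨r, ⟨hr0, hreq⟩, ?_⟩
    rintro y ⟨hy0, hy1⟩
    rcases lt_trichotomy y r with h | h | h
    · exact (nottwo lam hlam hl1 hlm y r hy0 h hy1 hreq).elim
    · exact h
    · exact (nottwo lam hlam hl1 hlm r y hr0 h hreq hy1).elim
  · intro ε hε
    by_cases hεν : ν ≤ ε
    · refine ⟨min (-(∫ ω, χ ω ∂μ) / 2) 1, hlam0, ?_⟩
      intro lam hlam _ ν' hν' hroot
      have := key lam hlam ν' hν' hroot
      rw [abs_sub_lt_iff]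
      constructor <;> linarith
    · push_neg at hεν
      have hνε : (0:ℝ) < ν - ε := by linarith
      obtain ⟨t, ht0, htn, htlt⟩ :=
        aux_small μ hmeas hbdd hC₀ le_rfl zero_le_one (by linarith) hmean hνε
      have hzero : ∀ r : ℝ, ∫ ω, Real.exp (C₀ * r * (χ ω + 0)) ∂μ
          = ∫ ω, Real.exp (C₀ * r * χ ω) ∂μ := by intro r; simp
      rw [hzero t] at htlt
      have hclt : ∫ ω, Real.exp (C₀ * (ν - ε) * χ ω) ∂μ < 1 := by
        have hνt : (0:ℝ) < ν - t := by linarith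
        have hc1 : (0:ℝ) < ε / (ν - t) := div_pos hε hνt
        have hc2 : (0:ℝ) ≤ (ν - ε - t) / (ν - t) := div_nonneg (by linarith) hνt.le
        have hsum : ε / (ν - t) + (ν - ε - t) / (ν - t) = 1 := by field_simp; ring
        have hcomb : ε / (ν - t) * t + (ν - ε - t) / (ν - t) * ν = ν - ε := by
          field_simp; ring
        have hcv := (aux_convex μ hmeas hbdd C₀ 0).2 (Set.mem_univ t) (Set.mem_univ ν)
          hc1.le hc2 hsum
        simp only [smul_eq_mul] at hcv
        rw [hcomb, hzero (ν - ε), hzero t, hzero ν, hexp] at hcv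
        have := mul_lt_mul_of_pos_left htlt hc1
        nlinarith
      have hcpos : (0:ℝ) < ∫ ω, Real.exp (C₀ * (ν - ε) * χ ω) ∂μ := by
        have hint : Integrable (fun ω => Real.exp (C₀ * (ν - ε) * (χ ω + 0))) μ :=
          aux_integrable μ hmeas hbdd C₀ (ν - ε) 0
        rw [← hzero (ν - ε)]
        exact integral_exp_pos (by simpa using hint)
      set c := ∫ ω, Real.exp (C₀ * (ν - ε) * χ ω) ∂μ with hcdef
      have hlogneg : Real.log c < 0 := Real.log_neg hcpos hclt
      refine ⟨min (min (-(∫ ω, χ ω ∂μ) / 2) 1) (-Real.log c / (C₀ * ν)),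
        lt_min hlam0 (div_pos (by linarith) (by positivity)), ?_⟩
      intro lam hlam hlamlt ν' hν'pos hroot
      have hlam2 : lam < -Real.log c / (C₀ * ν) := hlamlt.trans_le (min_le_right _ _)
      have hup : ν' < ν := key lam hlam ν' hν'pos hroot
      have hdown : ν - ε < ν' := by
        by_contra hcon
        push_neg at hcon
        have hHνε : ∫ ω, Real.exp (C₀ * (ν - ε) * (χ ω + lam)) ∂μ < 1 := by
          rw [hshift lam (ν - ε), ← hcdef]
          have h1 : Real.exp (C₀ * (ν - ε) * lam) ≤ Real.exp (C₀ * ν * lam) := by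
            apply Real.exp_le_exp.2
            have h0 : C₀ * ν * lam - C₀ * (ν - ε) * lam = C₀ * ε * lam := by ring
            have h0' : (0:ℝ) ≤ C₀ * ε * lam := by positivity
            linarith
          have h2 : Real.exp (C₀ * ν * lam) * c < 1 := by
            rw [← Real.exp_log hcpos, ← Real.exp_add, ← Real.exp_zero]
            apply Real.exp_lt_exp.2
            have h3 := (lt_div_iff₀ (by positivity : (0:ℝ) < C₀ * ν)).1 hlam2
            nlinarith
          calc Real.exp (C₀ * (ν - ε) * lam) * c ≤ Real.exp (C₀ * ν * lam) * c :=
              mul_le_mul_of_nonneg_right h1 hcpos.le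
            _ < 1 := h2
        have hb : (0:ℝ) < ν' / (ν - ε) := div_pos hν'pos hνε
        have ha : (0:ℝ) ≤ (ν - ε - ν') / (ν - ε) := div_nonneg (by linarith) hνε.le
        have hab : (ν - ε - ν') / (ν - ε) + ν' / (ν - ε) = 1 := by field_simp; ring
        have hcv := (aux_convex μ hmeas hbdd C₀ lam).2 (Set.mem_univ (0:ℝ))
          (Set.mem_univ (ν - ε)) ha hb.le hab
        simp only [smul_eq_mul, mul_zero, zero_add] at hcv
        rw [div_mul_cancel₀ ν' (ne_of_gt hνε)] at hcv
        rw [hroot, hH0 lam, mul_one] at hcv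
        have := mul_lt_mul_of_pos_left hHνε hb
        nlinarith
      rw [abs_sub_lt_iff]
      constructor <;> linarith
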